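/- Let M ∈ ℝ and assume that 2M·I − (γ/h) ∑_{j=1}^J [L_j, L_jᴴ] is positive semidefinite. Then for every λ > 0 the linear map A ↦ ℒA − (M+λ)A is a bijection of M_d(ℂ), and its inverse satisfies ‖(ℒ − (M+λ))^{-1} B‖ ≤ λ^{-1} ‖B‖ for all B ∈ M_d(ℂ). -/

import Mathlib

open Matrix
open scoped BigOperators ComplexOrder

/-- The Lindbladian `ℒA = (i/h)[P,A] + (γ/h) ∑ⱼ (LⱼALⱼᴴ − ½(LⱼᴴLⱼA + ALⱼᴴLⱼ))`. -/
noncomputable def Lindbladian {d J : ℕ} (h γ : ℝ) (P : Matrix (Fin d) (Fin d) ℂ)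
    (L : Fin J → Matrix (Fin d) (Fin d) ℂ) (A : Matrix (Fin d) (Fin d) ℂ) :
    Matrix (Fin d) (Fin d) ℂ :=
  (Complex.I / (h : ℂ)) • (P * A - A * P)
    + ((γ / h : ℝ) : ℂ) • ∑ j, (L j * A * (L j)ᴴ
        - (1 / 2 : ℂ) • ((L j)ᴴ * L j * A + A * ((L j)ᴴ * L j)))

/-- The adjoint Lindbladian
`ℒ*B = −(i/h)[P,B] + (γ/h) ∑ⱼ (LⱼᴴBLⱼ − ½(LⱼᴴLⱼB + BLⱼᴴLⱼ))`. -/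
noncomputable def LindbladianAdj {d J : ℕ} (h γ : ℝ) (P : Matrix (Fin d) (Fin d) ℂ)
    (L : Fin J → Matrix (Fin d) (Fin d) ℂ) (B : Matrix (Fin d) (Fin d) ℂ) :
    Matrix (Fin d) (Fin d) ℂ :=
  -(Complex.I / (h : ℂ)) • (P * B - B * P)
    + ((γ / h : ℝ) : ℂ) • ∑ j, ((L j)ᴴ * B * L j
        - (1 / 2 : ℂ) • ((L j)ᴴ * L j * B + B * ((L j)ᴴ * L j)))


/-- The Hilbert–Schmidt norm `‖A‖ = (tr(AAᴴ))^{1/2}`. -/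
noncomputable def hsNorm {d : ℕ} (A : Matrix (Fin d) (Fin d) ℂ) : ℝ :=
  Real.sqrt (((A * Aᴴ).trace).re)

/-! For the Hilbert–Schmidt inner product `⟪A, B⟫ = tr(B Aᴴ)` one has `Re ⟪A, ℒA⟫ ≤ M ‖A‖²`:
the Hamiltonian part contributes `(i/h) tr([P, A] Aᴴ)`, which is purely imaginary because that
trace is real for Hermitian `P`, and `2 Re tr(LA (AL)ᴴ) ≤ ‖LA‖² + ‖AL‖²` bounds each dissipative
term by `½ tr(A [L, Lᴴ] Aᴴ)`, whose weighted sum is at most `M ‖A‖²` by the positivity hypothesis.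
Hence `Re ⟪A, (ℒ − M − λ)A⟫ ≤ −λ‖A‖²`, and Cauchy–Schwarz gives `λ‖A‖ ≤ ‖(ℒ − M − λ)A‖`. This
makes `ℒ − M − λ` injective, hence bijective in finite dimension. -/

open scoped InnerProductSpace

section QuasiDissipative

variable {𝕜 E : Type*} [RCLike 𝕜] [NormedAddCommGroup E] [InnerProductSpace 𝕜 E]
  {T : E →ₗ[𝕜] E} {M lam : ℝ}

theorem LinearMap.norm_le_inv_mul_norm_sub_smul_of_re_inner_le
    (hT : ∀ x, RCLike.re ⟪x, T x⟫_𝕜 ≤ M * ‖x‖ ^ 2) (hlam : 0 < lam) (x : E) :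
    ‖x‖ ≤ lam⁻¹ * ‖T x - ((M + lam : ℝ) : 𝕜) • x‖ := by
  set y := T x - ((M + lam : ℝ) : 𝕜) • x
  have hre : RCLike.re ⟪x, y⟫_𝕜 = RCLike.re ⟪x, T x⟫_𝕜 - (M + lam) * ‖x‖ ^ 2 := by
    simp [y, inner_sub_right, inner_smul_right, inner_self_eq_norm_sq_to_K]
  have hcs : -RCLike.re ⟪x, y⟫_𝕜 ≤ ‖x‖ * ‖y‖ :=
    (neg_le_abs _).trans ((RCLike.abs_re_le_norm _).trans (norm_inner_le_norm x y))
  rw [le_inv_mul_iff₀ hlam]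
  rcases (norm_nonneg x).eq_or_lt with hx | hx
  · rw [← hx]
    simp
  · refine le_of_mul_le_mul_right ?_ hx
    nlinarith [hT x]

theorem LinearMap.bijective_sub_smul_of_re_inner_le [FiniteDimensional 𝕜 E]
    (hT : ∀ x, RCLike.re ⟪x, T x⟫_𝕜 ≤ M * ‖x‖ ^ 2) (hlam : 0 < lam) :
    Function.Bijective ⇑(T - ((M + lam : ℝ) : 𝕜) • LinearMap.id : E →ₗ[𝕜] E) := by
  have hinj : Function.Injective ⇑(T - ((M + lam : ℝ) : 𝕜) • LinearMap.id : E →ₗ[𝕜] E) := by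
    refine (injective_iff_map_eq_zero _).mpr fun x hx => norm_le_zero_iff.mp ?_
    have hx : T x - ((M + lam : ℝ) : 𝕜) • x = 0 := hx
    have := T.norm_le_inv_mul_norm_sub_smul_of_re_inner_le hT hlam x
    rwa [hx, norm_zero, mul_zero] at this
  exact ⟨hinj, LinearMap.injective_iff_surjective.mp hinj⟩

end QuasiDissipative

namespace Matrix

variable {m n : Type*} [Fintype m] [Fintype n]

theorem re_trace_mul_conjTranspose_comm (X Y : Matrix m n ℂ) :
    (Y * Xᴴ).trace.re = (X * Yᴴ).trace.re := by
  rw [← Complex.conj_re, starRingEnd_apply, ← trace_conjTranspose, conjTranspose_mul,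
    conjTranspose_conjTranspose]

theorem two_mul_re_trace_mul_conjTranspose_le (X Y : Matrix m n ℂ) :
    2 * (X * Yᴴ).trace.re ≤ (X * Xᴴ).trace.re + (Y * Yᴴ).trace.re := by
  have hsq : 0 ≤ ((X - Y) * (X - Y)ᴴ).trace.re :=
    (Complex.nonneg_iff.mp (posSemidef_self_mul_conjTranspose (X - Y)).trace_nonneg).1
  rw [conjTranspose_sub, Matrix.sub_mul, Matrix.mul_sub, Matrix.mul_sub, trace_sub, trace_sub,
    trace_sub] at hsq
  simp only [Complex.sub_re, re_trace_mul_conjTranspose_comm X Y] at hsq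
  linarith

theorem re_trace_mul_mul_conjTranspose_nonneg {C : Matrix n n ℂ} (hC : C.PosSemidef)
    (A : Matrix m n ℂ) : 0 ≤ (A * C * Aᴴ).trace.re :=
  (Complex.nonneg_iff.mp (hC.mul_mul_conjTranspose_same A).trace_nonneg).1

theorem im_trace_commutator_mul_conjTranspose {P : Matrix n n ℂ} (hP : P.IsHermitian)
    (A : Matrix n n ℂ) : ((P * A - A * P) * Aᴴ).trace.im = 0 := by
  rw [← Complex.conj_eq_iff_im, starRingEnd_apply, ← trace_conjTranspose]
  simp only [conjTranspose_mul, conjTranspose_sub, conjTranspose_conjTranspose, hP.eq,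
    Matrix.sub_mul, trace_sub, Matrix.mul_assoc]
  rw [trace_mul_comm P, Matrix.mul_assoc]

theorem two_mul_re_trace_dissipator_mul_conjTranspose_le (K A : Matrix n n ℂ) :
    2 * ((K * A * Kᴴ - (1 / 2 : ℂ) • (Kᴴ * K * A + A * (Kᴴ * K))) * Aᴴ).trace.re
      ≤ (A * (K * Kᴴ - Kᴴ * K) * Aᴴ).trace.re := by
  have hcs := two_mul_re_trace_mul_conjTranspose_le (K * A) (A * K)
  simp only [conjTranspose_mul, Matrix.sub_mul, Matrix.mul_sub, Matrix.add_mul, smul_mul_assoc,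
    trace_sub, trace_add, trace_smul, Matrix.mul_assoc] at hcs ⊢
  rw [trace_mul_comm Kᴴ]
  simp only [Matrix.mul_assoc, smul_eq_mul, Complex.mul_re, Complex.sub_re, Complex.add_re]
  norm_num
  linarith

end Matrix

noncomputable def lindbladianLinearMap {d J : ℕ} (h γ : ℝ) (P : Matrix (Fin d) (Fin d) ℂ)
    (L : Fin J → Matrix (Fin d) (Fin d) ℂ) :
    Matrix (Fin d) (Fin d) ℂ →ₗ[ℂ] Matrix (Fin d) (Fin d) ℂ where
  toFun := Lindbladian h γ P L
  map_add' A B := by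
    simp only [Lindbladian, Matrix.mul_add, Matrix.add_mul, smul_add, Finset.sum_add_distrib,
      Finset.sum_sub_distrib, ← Finset.smul_sum]
    module
  map_smul' c A := by
    simp only [Lindbladian, Matrix.mul_smul, Matrix.smul_mul, smul_add, Finset.sum_add_distrib,
      Finset.sum_sub_distrib, ← Finset.smul_sum, RingHom.id_apply]
    module

theorem re_trace_lindbladian_mul_conjTranspose_le {d J : ℕ} {h γ : ℝ}
    {P : Matrix (Fin d) (Fin d) ℂ} {L : Fin J → Matrix (Fin d) (Fin d) ℂ} {M : ℝ}
    (hγh : 0 ≤ γ / h) (hP : P.IsHermitian)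
    (hM : (((2 * M : ℝ) : ℂ) • (1 : Matrix (Fin d) (Fin d) ℂ)
        - ((γ / h : ℝ) : ℂ) • ∑ j, (L j * (L j)ᴴ - (L j)ᴴ * L j)).PosSemidef)
    (A : Matrix (Fin d) (Fin d) ℂ) :
    (Lindbladian h γ P L A * Aᴴ).trace.re ≤ M * (A * Aᴴ).trace.re := by
  have hpos := re_trace_mul_mul_conjTranspose_nonneg hM A
  rw [Matrix.mul_sub, Matrix.sub_mul, Matrix.mul_smul, Matrix.mul_smul, Matrix.smul_mul,
    Matrix.smul_mul, Matrix.mul_one, Matrix.mul_sum, Matrix.sum_mul, trace_sub, trace_smul,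
    trace_smul, trace_sum, smul_eq_mul, smul_eq_mul, Complex.sub_re, Complex.re_ofReal_mul,
    Complex.re_ofReal_mul, Complex.re_sum] at hpos
  have hdiss := Finset.sum_le_sum fun j (_ : j ∈ Finset.univ) =>
    two_mul_re_trace_dissipator_mul_conjTranspose_le (L j) A
  rw [← Finset.mul_sum] at hdiss
  have hham : (Complex.I / h * ((P * A - A * P) * Aᴴ).trace).re = 0 := by
    simp [Complex.mul_re, im_trace_commutator_mul_conjTranspose hP A]
  simp only [Lindbladian, Matrix.add_mul, Matrix.smul_mul, Matrix.sum_mul, trace_add,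
    trace_smul, trace_sum, smul_eq_mul, Complex.add_re, hham, Complex.re_ofReal_mul,
    Complex.re_sum]
  linarith [mul_le_mul_of_nonneg_left hdiss hγh]

theorem LinearMap.bijective_sub_smul_and_hsNorm_le_of_re_trace_le {d : ℕ}
    {T : Matrix (Fin d) (Fin d) ℂ →ₗ[ℂ] Matrix (Fin d) (Fin d) ℂ} {M lam : ℝ}
    (hT : ∀ A, (T A * Aᴴ).trace.re ≤ M * (A * Aᴴ).trace.re) (hlam : 0 < lam) :
    Function.Bijective ⇑(T - ((M + lam : ℝ) : ℂ) • LinearMap.id : _ →ₗ[ℂ] _) ∧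
      ∀ A, hsNorm A ≤ lam⁻¹ * hsNorm (T A - ((M + lam : ℝ) : ℂ) • A) := by
  -- the Hilbert–Schmidt inner product `⟪A, B⟫ = tr(B * 1 * Aᴴ)`
  let _ := toMatrixNormedAddCommGroup (1 : Matrix (Fin d) (Fin d) ℂ) PosDef.one
  let _ := toMatrixInnerProductSpace (1 : Matrix (Fin d) (Fin d) ℂ) PosSemidef.one
  have norm_sq_eq (A : Matrix (Fin d) (Fin d) ℂ) : ‖A‖ ^ 2 = (A * Aᴴ).trace.re := by
    rw [← inner_self_eq_norm_sq (𝕜 := ℂ)]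
    change (A * 1 * Aᴴ).trace.re = _
    rw [Matrix.mul_one]
  have hT' (A : Matrix (Fin d) (Fin d) ℂ) : RCLike.re ⟪A, T A⟫_ℂ ≤ M * ‖A‖ ^ 2 := by
    rw [norm_sq_eq]
    change (T A * 1 * Aᴴ).trace.re ≤ _
    rw [Matrix.mul_one]
    exact hT A
  have hsNorm_eq (A : Matrix (Fin d) (Fin d) ℂ) : hsNorm A = ‖A‖ := by
    rw [hsNorm, ← norm_sq_eq, Real.sqrt_sq (norm_nonneg A)]
  refine ⟨T.bijective_sub_smul_of_re_inner_le hT' hlam, fun A => ?_⟩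
  rw [hsNorm_eq, hsNorm_eq]
  exact T.norm_le_inv_mul_norm_sub_smul_of_re_inner_le hT' hlam A

theorem lindbladian_resolvent_bijective_general (d J : ℕ) (h γ : ℝ)
    (hh : 0 < h) (hγ : 0 ≤ γ) (P : Matrix (Fin d) (Fin d) ℂ) (hP : P.IsHermitian)
    (L : Fin J → Matrix (Fin d) (Fin d) ℂ) (M : ℝ)
    (hM : (((2 * M : ℝ) : ℂ) • (1 : Matrix (Fin d) (Fin d) ℂ)
        - ((γ / h : ℝ) : ℂ) • ∑ j, (L j * (L j)ᴴ - (L j)ᴴ * L j)).PosSemidef)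
    (lam : ℝ) (hlam : 0 < lam) :
    Function.Bijective
        (fun A : Matrix (Fin d) (Fin d) ℂ =>
          Lindbladian h γ P L A - (((M + lam : ℝ) : ℂ)) • A)
      ∧ ∀ A B : Matrix (Fin d) (Fin d) ℂ,
          Lindbladian h γ P L A - (((M + lam : ℝ) : ℂ)) • A = B →
          hsNorm A ≤ lam⁻¹ * hsNorm B := by
  obtain ⟨hbij, hbound⟩ :=
    (lindbladianLinearMap h γ P L).bijective_sub_smul_and_hsNorm_le_of_re_trace_le
      (re_trace_lindbladian_mul_conjTranspose_le (div_nonneg hγ hh.le) hP hM) hlam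
  exact ⟨hbij, fun A _ hAB => hAB ▸ hbound A⟩

/-- The resolvent bound in the proof of Proposition 4.6 (finite-dimensional instance):
if `(γ/h) ∑ⱼ [Lⱼ,Lⱼᴴ] ≤ 2M`, then for every `λ > 0` the map `A ↦ ℒA − (M+λ)A` is a
bijection of `M_d(ℂ)` whose inverse satisfies `‖(ℒ − (M+λ))⁻¹B‖ ≤ λ⁻¹‖B‖`. -/
theorem lindbladian_resolvent_bijective (d J : ℕ) (hd : 1 ≤ d) (hJ : 1 ≤ J) (h γ : ℝ)
    (hh : 0 < h) (hγ : 0 ≤ γ) (P : Matrix (Fin d) (Fin d) ℂ) (hP : P.IsHermitian)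
    (L : Fin J → Matrix (Fin d) (Fin d) ℂ) (M : ℝ)
    (hM : (((2 * M : ℝ) : ℂ) • (1 : Matrix (Fin d) (Fin d) ℂ)
        - ((γ / h : ℝ) : ℂ) • ∑ j, (L j * (L j)ᴴ - (L j)ᴴ * L j)).PosSemidef)
    (lam : ℝ) (hlam : 0 < lam) :
    Function.Bijective
        (fun A : Matrix (Fin d) (Fin d) ℂ =>
          Lindbladian h γ P L A - (((M + lam : ℝ) : ℂ)) • A)
      ∧ ∀ A B : Matrix (Fin d) (Fin d) ℂ,
          Lindbladian h γ P L A - (((M + lam : ℝ) : ℂ)) • A = B →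
          hsNorm A ≤ lam⁻¹ * hsNorm B :=
  lindbladian_resolvent_bijective_general d J h γ hh hγ P hP L M hM lam hlam
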